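/- arXiv:2110.15676 — 6 statements merged into one kernel-verified Lean document; each statement's English description precedes it below -/
import Mathlib

section
/- Let N ≥ 2, let r_{ij} (i ≠ j) be real numbers, let m_i > 0 for all i, let Δt > 0, and let ũ ∈ ℝ^N. Then the limited antidiffusive term of Zalesak's limiter satisfies, for every i, the two-sided bound m_i Q_i^- ≤ Δt ∑_{j≠i} α_{ij} r_{ij} ≤ m_i Q_i^+. -/
noncomputable section

/-- For `N ≥ 2`, the set of indices different from `i` is nonempty. -/
lemma eraseUnivNonempty {N : ℕ} (hN : 2 ≤ N) (i : Fin N) :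
    ((Finset.univ : Finset (Fin N)).erase i).Nonempty := by
  rw [← Finset.card_pos, Finset.card_erase_of_mem (Finset.mem_univ i), Finset.card_univ,
    Fintype.card_fin]
  omega

/-- For `N ≥ 1`, `Fin N` is nonempty as a finset. -/
lemma univNonempty {N : ℕ} (hN : 1 ≤ N) :
    (Finset.univ : Finset (Fin N)).Nonempty := by
  rw [← Finset.card_pos, Finset.card_univ, Fintype.card_fin]
  omega

/-- `P_i^+ = ∑_{j ≠ i} max{r_{ij}, 0}`. -/
def Pp {N : ℕ} (r : Fin N → Fin N → ℝ) (i : Fin N) : ℝ :=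
  ∑ j ∈ Finset.univ.erase i, max (r i j) 0

/-- `P_i^- = ∑_{j ≠ i} min{r_{ij}, 0}`. -/
def Pm {N : ℕ} (r : Fin N → Fin N → ℝ) (i : Fin N) : ℝ :=
  ∑ j ∈ Finset.univ.erase i, min (r i j) 0

/-- `Q_i^+ = max{0, max_{j ≠ i} (ũ_j - ũ_i)}`. -/
def Qp {N : ℕ} (hN : 2 ≤ N) (u : Fin N → ℝ) (i : Fin N) : ℝ :=
  max 0 ((Finset.univ.erase i).sup' (eraseUnivNonempty hN i) fun j => u j - u i)

/-- `Q_i^- = min{0, min_{j ≠ i} (ũ_j - ũ_i)}`. -/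
def Qm {N : ℕ} (hN : 2 ≤ N) (u : Fin N → ℝ) (i : Fin N) : ℝ :=
  min 0 ((Finset.univ.erase i).inf' (eraseUnivNonempty hN i) fun j => u j - u i)

/-- `R_i^+ = min{1, m_i Q_i^+ / (Δt P_i^+)}`, with `R_i^+ = 1` if `P_i^+ = 0`. -/
def Rp {N : ℕ} (hN : 2 ≤ N) (r : Fin N → Fin N → ℝ) (m : Fin N → ℝ) (Δt : ℝ)
    (u : Fin N → ℝ) (i : Fin N) : ℝ :=
  if Pp r i = 0 then 1 else min 1 (m i * Qp hN u i / (Δt * Pp r i))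

/-- `R_i^- = min{1, m_i Q_i^- / (Δt P_i^-)}`, with `R_i^- = 1` if `P_i^- = 0`. -/
def Rm {N : ℕ} (hN : 2 ≤ N) (r : Fin N → Fin N → ℝ) (m : Fin N → ℝ) (Δt : ℝ)
    (u : Fin N → ℝ) (i : Fin N) : ℝ :=
  if Pm r i = 0 then 1 else min 1 (m i * Qm hN u i / (Δt * Pm r i))

/-- Zalesak's correction factors. -/
def zalesakAlpha {N : ℕ} (hN : 2 ≤ N) (r : Fin N → Fin N → ℝ) (m : Fin N → ℝ)
    (Δt : ℝ) (u : Fin N → ℝ) (i j : Fin N) : ℝ :=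
  if 0 < r i j then min (Rp hN r m Δt u i) (Rm hN r m Δt u j)
  else min (Rm hN r m Δt u i) (Rp hN r m Δt u j)

/-!
Since `0 ≤ α_{ij}` and `α_{ij} ≤ R_i^+` whenever `r_{ij} > 0`, the limited sum
`∑_{j≠i} α_{ij} r_{ij}` is at most `R_i^+ P_i^+`, and `R_i^+` is chosen exactly so that
`Δt R_i^+ P_i^+ ≤ m_i Q_i^+`. The lower bound is the mirror image with `α_{ij} ≤ R_i^-` on the
non-positive fluxes.
-/

lemma Finset.sum_mul_le_mul_sum_max_zero {ι : Type*} (s : Finset ι) {α r : ι → ℝ} {R : ℝ}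
    (hα : ∀ j ∈ s, 0 ≤ α j) (hαR : ∀ j ∈ s, 0 < r j → α j ≤ R) :
    ∑ j ∈ s, α j * r j ≤ R * ∑ j ∈ s, max (r j) 0 := by
  rw [Finset.mul_sum]
  refine Finset.sum_le_sum fun j hj => ?_
  rcases lt_or_ge 0 (r j) with hr | hr
  · rw [max_eq_left hr.le]
    exact mul_le_mul_of_nonneg_right (hαR j hj hr) hr.le
  · rw [max_eq_right hr, mul_zero]
    exact mul_nonpos_of_nonneg_of_nonpos (hα j hj) hr

lemma Finset.mul_sum_min_zero_le_sum_mul {ι : Type*} (s : Finset ι) {α r : ι → ℝ} {R : ℝ}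
    (hα : ∀ j ∈ s, 0 ≤ α j) (hαR : ∀ j ∈ s, r j ≤ 0 → α j ≤ R) :
    R * ∑ j ∈ s, min (r j) 0 ≤ ∑ j ∈ s, α j * r j := by
  rw [Finset.mul_sum]
  refine Finset.sum_le_sum fun j hj => ?_
  rcases le_or_gt (r j) 0 with hr | hr
  · rw [min_eq_left hr]
    exact mul_le_mul_of_nonpos_right (hαR j hj hr) hr
  · rw [min_eq_right hr.le, mul_zero]
    exact mul_nonneg (hα j hj) hr.le

lemma min_div_mul_le_of_pos {a c d : ℝ} (hd : 0 < d) : min a (c / d) * d ≤ c :=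
  calc min a (c / d) * d ≤ c / d * d := mul_le_mul_of_nonneg_right (min_le_right _ _) hd.le
    _ = c := div_mul_cancel₀ c hd.ne'

lemma le_min_div_mul_of_neg {a c d : ℝ} (hd : d < 0) : c ≤ min a (c / d) * d :=
  calc c = c / d * d := (div_mul_cancel₀ c hd.ne).symm
    _ ≤ min a (c / d) * d := mul_le_mul_of_nonpos_right (min_le_right _ _) hd.le

section Limiter

variable {N : ℕ} (hN : 2 ≤ N) (r : Fin N → Fin N → ℝ) {m : Fin N → ℝ} {Δt : ℝ}
  (u : Fin N → ℝ)

lemma Qp_nonneg (i : Fin N) : 0 ≤ Qp hN u i :=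
  le_max_left _ _

lemma Qm_nonpos (i : Fin N) : Qm hN u i ≤ 0 :=
  min_le_left _ _

lemma Pp_nonneg (i : Fin N) : 0 ≤ Pp r i :=
  Finset.sum_nonneg fun _ _ => le_max_right _ _

lemma Pm_nonpos (i : Fin N) : Pm r i ≤ 0 :=
  Finset.sum_nonpos fun _ _ => min_le_right _ _

lemma Rp_nonneg {i : Fin N} (hm : 0 ≤ m i) (hΔt : 0 ≤ Δt) : 0 ≤ Rp hN r m Δt u i := by
  unfold Rp
  split_ifs
  · exact zero_le_one
  · exact le_min zero_le_one <|
      div_nonneg (mul_nonneg hm (Qp_nonneg hN u i)) (mul_nonneg hΔt (Pp_nonneg r i))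

lemma Rm_nonneg {i : Fin N} (hm : 0 ≤ m i) (hΔt : 0 ≤ Δt) : 0 ≤ Rm hN r m Δt u i := by
  unfold Rm
  split_ifs
  · exact zero_le_one
  · exact le_min zero_le_one <|
      div_nonneg_of_nonpos (mul_nonpos_of_nonneg_of_nonpos hm (Qm_nonpos hN u i))
        (mul_nonpos_of_nonneg_of_nonpos hΔt (Pm_nonpos r i))

lemma mul_Rp_mul_Pp_le {i : Fin N} (hm : 0 ≤ m i) (hΔt : 0 < Δt) :
    Δt * (Rp hN r m Δt u i * Pp r i) ≤ m i * Qp hN u i := by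
  unfold Rp
  split_ifs with hP
  · rw [hP, mul_zero, mul_zero]
    exact mul_nonneg hm (Qp_nonneg hN u i)
  · have hΔtP : 0 < Δt * Pp r i := mul_pos hΔt ((Pp_nonneg r i).lt_of_ne' hP)
    calc Δt * (min 1 (m i * Qp hN u i / (Δt * Pp r i)) * Pp r i)
        = min 1 (m i * Qp hN u i / (Δt * Pp r i)) * (Δt * Pp r i) := by ring
      _ ≤ m i * Qp hN u i := min_div_mul_le_of_pos hΔtP

lemma le_mul_Rm_mul_Pm {i : Fin N} (hm : 0 ≤ m i) (hΔt : 0 < Δt) :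
    m i * Qm hN u i ≤ Δt * (Rm hN r m Δt u i * Pm r i) := by
  unfold Rm
  split_ifs with hP
  · rw [hP, mul_zero, mul_zero]
    exact mul_nonpos_of_nonneg_of_nonpos hm (Qm_nonpos hN u i)
  · have hΔtP : Δt * Pm r i < 0 := mul_neg_of_pos_of_neg hΔt ((Pm_nonpos r i).lt_of_ne hP)
    calc m i * Qm hN u i
        ≤ min 1 (m i * Qm hN u i / (Δt * Pm r i)) * (Δt * Pm r i) := le_min_div_mul_of_neg hΔtP
      _ = Δt * (min 1 (m i * Qm hN u i / (Δt * Pm r i)) * Pm r i) := by ring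

lemma zalesakAlpha_nonneg (hm : ∀ k, 0 ≤ m k) (hΔt : 0 ≤ Δt) (i j : Fin N) :
    0 ≤ zalesakAlpha hN r m Δt u i j := by
  unfold zalesakAlpha
  split_ifs
  · exact le_min (Rp_nonneg hN r u (hm i) hΔt) (Rm_nonneg hN r u (hm j) hΔt)
  · exact le_min (Rm_nonneg hN r u (hm i) hΔt) (Rp_nonneg hN r u (hm j) hΔt)

lemma zalesakAlpha_le_Rp {i j : Fin N} (hr : 0 < r i j) :
    zalesakAlpha hN r m Δt u i j ≤ Rp hN r m Δt u i := by
  rw [zalesakAlpha, if_pos hr]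
  exact min_le_left _ _

lemma zalesakAlpha_le_Rm {i j : Fin N} (hr : r i j ≤ 0) :
    zalesakAlpha hN r m Δt u i j ≤ Rm hN r m Δt u i := by
  rw [zalesakAlpha, if_neg hr.not_gt]
  exact min_le_left _ _

end Limiter

/-- Two-sided bound on the limited antidiffusive term of Zalesak's limiter. -/
theorem zalesak_limited_antidiffusion_bounds
    (N : ℕ) (hN : 2 ≤ N) (r : Fin N → Fin N → ℝ)
    (m : Fin N → ℝ) (hm : ∀ i, 0 < m i) (Δt : ℝ) (hΔt : 0 < Δt) (u : Fin N → ℝ) :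
    ∀ i, m i * Qm hN u i ≤ Δt * ∑ j ∈ Finset.univ.erase i, zalesakAlpha hN r m Δt u i j * r i j ∧
      Δt * ∑ j ∈ Finset.univ.erase i, zalesakAlpha hN r m Δt u i j * r i j ≤ m i * Qp hN u i := by
  intro i
  have hα : ∀ j ∈ Finset.univ.erase i, 0 ≤ zalesakAlpha hN r m Δt u i j :=
    fun j _ => zalesakAlpha_nonneg hN r u (fun k => (hm k).le) hΔt.le i j
  constructor
  · calc m i * Qm hN u i
        ≤ Δt * (Rm hN r m Δt u i * Pm r i) := le_mul_Rm_mul_Pm hN r u (hm i).le hΔt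
      _ ≤ _ := mul_le_mul_of_nonneg_left
          (Finset.mul_sum_min_zero_le_sum_mul _ hα fun _ _ => zalesakAlpha_le_Rm hN r u) hΔt.le
  · calc Δt * ∑ j ∈ Finset.univ.erase i, zalesakAlpha hN r m Δt u i j * r i j
        ≤ Δt * (Rp hN r m Δt u i * Pp r i) := mul_le_mul_of_nonneg_left
          (Finset.sum_mul_le_mul_sum_max_zero _ hα fun _ _ => zalesakAlpha_le_Rp hN r u) hΔt.le
      _ ≤ m i * Qp hN u i := mul_Rp_mul_Pp_le hN r u (hm i).le hΔt
end
end

section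
/- Let N ≥ 2, let r_{ij} (i ≠ j) be real numbers, let m_i > 0 for all i, let Δt > 0, and let ũ ∈ ℝ^N. Then the flux-corrected value produced by Zalesak's limiter satisfies the local discrete maximum principle: for every i, min_{1≤j≤N} ũ_j ≤ ũ_i + (Δt/m_i) ∑_{j≠i} α_{ij} r_{ij} ≤ max_{1≤j≤N} ũ_j. -/
noncomputable section

/-! Each limited flux `α_{ij} r_{ij}` is bounded above by `R_i^+ max{r_{ij}, 0}`, so the total
correction is at most `R_i^+ P_i^+`, and `R_i^+` was chosen so that `Δt R_i^+ P_i^+ ≤ m_i Q_i^+`.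
Hence the correction raises `ũ_i` by at most `Q_i^+ ≤ max_j ũ_j - ũ_i`; the lower bound is
symmetric, with `R_i^-`, `P_i^-`, `Q_i^-`. -/

lemma min_one_div_mul_le {a b : ℝ} (hb : 0 < b) : min 1 (a / b) * b ≤ a :=
  calc min 1 (a / b) * b ≤ a / b * b := mul_le_mul_of_nonneg_right (min_le_right _ _) hb.le
    _ = a := div_mul_cancel₀ a hb.ne'

lemma le_min_one_div_mul {a b : ℝ} (hb : b < 0) : a ≤ min 1 (a / b) * b :=
  calc a = a / b * b := (div_mul_cancel₀ a hb.ne).symm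
    _ ≤ min 1 (a / b) * b := mul_le_mul_of_nonpos_right (min_le_right _ _) hb.le

section Zalesak

variable {N : ℕ} (hN : 2 ≤ N) (r : Fin N → Fin N → ℝ) {m : Fin N → ℝ} {Δt : ℝ} (u : Fin N → ℝ)

lemma Qp_le_sup'_sub (hne : (Finset.univ : Finset (Fin N)).Nonempty) (i : Fin N) :
    Qp hN u i ≤ Finset.univ.sup' hne u - u i :=
  max_le (sub_nonneg.2 (Finset.le_sup' u (Finset.mem_univ i)))
    (Finset.sup'_le _ _ fun j _ => sub_le_sub_right (Finset.le_sup' u (Finset.mem_univ j)) _)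

lemma inf'_sub_le_Qm (hne : (Finset.univ : Finset (Fin N)).Nonempty) (i : Fin N) :
    Finset.univ.inf' hne u - u i ≤ Qm hN u i :=
  le_min (sub_nonpos.2 (Finset.inf'_le u (Finset.mem_univ i)))
    (Finset.le_inf' _ _ fun j _ => sub_le_sub_right (Finset.inf'_le u (Finset.mem_univ j)) _)

lemma Rp_mul_le {i : Fin N} (hm : 0 ≤ m i) (hΔt : 0 < Δt) :
    Rp hN r m Δt u i * (Δt * Pp r i) ≤ m i * Qp hN u i := by
  unfold Rp
  split_ifs with hP
  · rw [hP, mul_zero, mul_zero]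
    exact mul_nonneg hm (Qp_nonneg hN u i)
  · exact min_one_div_mul_le (mul_pos hΔt ((Pp_nonneg r i).lt_of_ne' hP))

lemma le_Rm_mul {i : Fin N} (hm : 0 ≤ m i) (hΔt : 0 < Δt) :
    m i * Qm hN u i ≤ Rm hN r m Δt u i * (Δt * Pm r i) := by
  unfold Rm
  split_ifs with hP
  · rw [hP, mul_zero, mul_zero]
    exact mul_nonpos_of_nonneg_of_nonpos hm (Qm_nonpos hN u i)
  · exact le_min_one_div_mul (mul_neg_of_pos_of_neg hΔt ((Pm_nonpos r i).lt_of_ne hP))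

lemma zalesakAlpha_mul_le (hm : ∀ i, 0 ≤ m i) (hΔt : 0 ≤ Δt) (i j : Fin N) :
    zalesakAlpha hN r m Δt u i j * r i j ≤ Rp hN r m Δt u i * max (r i j) 0 := by
  unfold zalesakAlpha
  split_ifs with hr
  · rw [max_eq_left hr.le]
    exact mul_le_mul_of_nonneg_right (min_le_left _ _) hr.le
  · rw [max_eq_right (not_lt.1 hr), mul_zero]
    exact mul_nonpos_of_nonneg_of_nonpos
      (le_min (Rm_nonneg hN r u (hm i) hΔt) (Rp_nonneg hN r u (hm j) hΔt)) (not_lt.1 hr)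

lemma Rm_mul_le_zalesakAlpha_mul (hm : ∀ i, 0 ≤ m i) (hΔt : 0 ≤ Δt) (i j : Fin N) :
    Rm hN r m Δt u i * min (r i j) 0 ≤ zalesakAlpha hN r m Δt u i j * r i j := by
  unfold zalesakAlpha
  split_ifs with hr
  · rw [min_eq_right hr.le, mul_zero]
    exact mul_nonneg (le_min (Rp_nonneg hN r u (hm i) hΔt) (Rm_nonneg hN r u (hm j) hΔt)) hr.le
  · rw [min_eq_left (not_lt.1 hr)]
    exact mul_le_mul_of_nonpos_right (min_le_left _ _) (not_lt.1 hr)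

lemma mul_sum_zalesakAlpha_mul_le_Qp (hm : ∀ i, 0 < m i) (hΔt : 0 < Δt) (i : Fin N) :
    Δt / m i * ∑ j ∈ Finset.univ.erase i, zalesakAlpha hN r m Δt u i j * r i j ≤ Qp hN u i := by
  have hsum : ∑ j ∈ Finset.univ.erase i, zalesakAlpha hN r m Δt u i j * r i j ≤
      Rp hN r m Δt u i * Pp r i := by
    rw [Pp, Finset.mul_sum]
    exact Finset.sum_le_sum fun j _ => zalesakAlpha_mul_le hN r u (fun k => (hm k).le) hΔt.le i j
  rw [div_mul_eq_mul_div, div_le_iff₀ (hm i), mul_comm (Qp hN u i)]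
  calc Δt * ∑ j ∈ Finset.univ.erase i, zalesakAlpha hN r m Δt u i j * r i j
      ≤ Δt * (Rp hN r m Δt u i * Pp r i) := mul_le_mul_of_nonneg_left hsum hΔt.le
    _ = Rp hN r m Δt u i * (Δt * Pp r i) := mul_left_comm _ _ _
    _ ≤ m i * Qp hN u i := Rp_mul_le hN r u (hm i).le hΔt

lemma Qm_le_mul_sum_zalesakAlpha_mul (hm : ∀ i, 0 < m i) (hΔt : 0 < Δt) (i : Fin N) :
    Qm hN u i ≤ Δt / m i * ∑ j ∈ Finset.univ.erase i, zalesakAlpha hN r m Δt u i j * r i j := by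
  have hsum : Rm hN r m Δt u i * Pm r i ≤
      ∑ j ∈ Finset.univ.erase i, zalesakAlpha hN r m Δt u i j * r i j := by
    rw [Pm, Finset.mul_sum]
    exact Finset.sum_le_sum fun j _ =>
      Rm_mul_le_zalesakAlpha_mul hN r u (fun k => (hm k).le) hΔt.le i j
  rw [div_mul_eq_mul_div, le_div_iff₀ (hm i), mul_comm (Qm hN u i)]
  calc m i * Qm hN u i
      ≤ Rm hN r m Δt u i * (Δt * Pm r i) := le_Rm_mul hN r u (hm i).le hΔt
    _ = Δt * (Rm hN r m Δt u i * Pm r i) := mul_left_comm _ _ _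
    _ ≤ Δt * ∑ j ∈ Finset.univ.erase i, zalesakAlpha hN r m Δt u i j * r i j :=
      mul_le_mul_of_nonneg_left hsum hΔt.le

end Zalesak

/-- Local discrete maximum principle for the flux-corrected value produced by
Zalesak's limiter. -/
theorem zalesak_local_discrete_maximum_principle
    (N : ℕ) (hN : 2 ≤ N) (r : Fin N → Fin N → ℝ)
    (m : Fin N → ℝ) (hm : ∀ i, 0 < m i) (Δt : ℝ) (hΔt : 0 < Δt) (u : Fin N → ℝ) :
    ∀ i,
      Finset.univ.inf' (univNonempty (by omega)) u ≤
        u i + Δt / m i * ∑ j ∈ Finset.univ.erase i, zalesakAlpha hN r m Δt u i j * r i j ∧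
      u i + Δt / m i * ∑ j ∈ Finset.univ.erase i, zalesakAlpha hN r m Δt u i j * r i j ≤
        Finset.univ.sup' (univNonempty (by omega)) u := by
  intro i
  have hne : (Finset.univ : Finset (Fin N)).Nonempty := univNonempty (by omega)
  constructor
  · linarith [inf'_sub_le_Qm hN u hne i, Qm_le_mul_sum_zalesakAlpha_mul hN r u hm hΔt i]
  · linarith [Qp_le_sup'_sub hN u hne i, mul_sum_zalesakAlpha_mul_le_Qp hN r u hm hΔt i]
end
end

section
/- Let d_{ij} < 0 and let r_{ij}, ū_{ij}, ū_{ji}, u_i^{min}, u_i^{max}, u_j^{min}, u_j^{max} be real numbers with u_i^{min} ≤ ū_{ij} ≤ u_i^{max} and u_j^{min} ≤ ū_{ji} ≤ u_j^{max}. Then the limited bar states associated with the MC-limited flux r*_{ij} remain in the local bounds: u_i^{min} ≤ ū_{ij} - r*_{ij}/(2d_{ij}) ≤ u_i^{max} and u_j^{min} ≤ ū_{ji} + r*_{ij}/(2d_{ij}) ≤ u_j^{max}. -/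
noncomputable section

/-- The monolithic convex (MC) limited flux. -/
def mcFlux (d r ubarij ubarji uimin uimax ujmin ujmax : ℝ) : ℝ :=
  if 0 < r then min r (min (2 * d * (ubarij - uimax)) (2 * d * (ujmin - ubarji)))
  else max r (max (2 * d * (ubarij - uimin)) (2 * d * (ujmax - ubarji)))

/-- The limited bar states associated with the MC-limited flux remain within
the local bounds. -/
theorem mc_limiter_bar_states_in_bounds
    (d r ubarij ubarji uimin uimax ujmin ujmax : ℝ)
    (hd : d < 0)
    (h1 : uimin ≤ ubarij) (h2 : ubarij ≤ uimax)
    (h3 : ujmin ≤ ubarji) (h4 : ubarji ≤ ujmax) :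
    (uimin ≤ ubarij - mcFlux d r ubarij ubarji uimin uimax ujmin ujmax / (2 * d) ∧
      ubarij - mcFlux d r ubarij ubarji uimin uimax ujmin ujmax / (2 * d) ≤ uimax) ∧
    (ujmin ≤ ubarji + mcFlux d r ubarij ubarji uimin uimax ujmin ujmax / (2 * d) ∧
      ubarji + mcFlux d r ubarij ubarji uimin uimax ujmin ujmax / (2 * d) ≤ ujmax) := by
  have hD : 2 * d < 0 := by linarith
  have hDne : (2 * d) ≠ 0 := ne_of_lt hD
  unfold mcFlux
  split_ifs with hr
  · set f := min r (min (2 * d * (ubarij - uimax)) (2 * d * (ujmin - ubarji))) with hf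
    have hf0 : 0 ≤ f := by
      refine le_min hr.le (le_min ?_ ?_)
      · nlinarith
      · nlinarith
    have hfA : f ≤ 2 * d * (ubarij - uimax) := le_trans (min_le_right _ _) (min_le_left _ _)
    have hfB : f ≤ 2 * d * (ujmin - ubarji) := le_trans (min_le_right _ _) (min_le_right _ _)
    have hmul : f / (2 * d) * (2 * d) = f := div_mul_cancel₀ _ hDne
    set q := f / (2 * d) with hq
    refine ⟨⟨?_, ?_⟩, ?_, ?_⟩ <;> nlinarith [hmul, hf0, hfA, hfB, hD]
  · set f := max r (max (2 * d * (ubarij - uimin)) (2 * d * (ujmax - ubarji))) with hf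
    have hf0 : f ≤ 0 := by
      refine max_le (not_lt.mp hr) (max_le ?_ ?_)
      · nlinarith
      · nlinarith
    have hfA : 2 * d * (ubarij - uimin) ≤ f := le_trans (le_max_left _ _) (le_max_right _ _)
    have hfB : 2 * d * (ujmax - ubarji) ≤ f := le_trans (le_max_right _ _) (le_max_right _ _)
    have hmul : f / (2 * d) * (2 * d) = f := div_mul_cancel₀ _ hDne
    set q := f / (2 * d) with hq
    refine ⟨⟨?_, ?_⟩, ?_, ?_⟩ <;> nlinarith [hmul, hf0, hfA, hfB, hD]
end
end

section
/- Let a_{ij}, a_{ji} ∈ ℝ satisfy a_{ij} + a_{ji} ≥ 0 and max{a_{ij}, 0, a_{ji}} > 0, and set d_{ij} = -max{a_{ij}, 0, a_{ji}} (so d_{ij} < 0). Then -d_{ij} ≥ |a_{ij}|, and for all real u_i, u_j the bar state ū_{ij} defined by 2d_{ij} ū_{ij} = d_{ij}(u_i + u_j) + a_{ij}(u_j - u_i) is a convex combination of u_i and u_j; in particular min{u_i, u_j} ≤ ū_{ij} ≤ max{u_i, u_j}. -/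
/-! The bar state is `θ u_i + (1 - θ) u_j` with weight `θ = (d - a) / (2d)`, and the bound
`|a| ≤ -d` is exactly what puts `θ` in `[0, 1]`. That bound holds because `-d` dominates both
`a_{ij}` and `a_{ji} ≥ -a_{ij}`. -/

open Set

noncomputable def barState (d a x y : ℝ) : ℝ :=
  (d * (x + y) + a * (y - x)) / (2 * d)

theorem abs_le_max_of_add_nonneg {a b : ℝ} (h : 0 ≤ a + b) : |a| ≤ max a (max 0 b) := by
  have hb : b ≤ max a (max 0 b) := (le_max_right 0 b).trans (le_max_right _ _)
  exact abs_le.2 ⟨by linarith, le_max_left _ _⟩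

theorem barState_eq_weighted_sum {d : ℝ} (hd : d ≠ 0) (a x y : ℝ) :
    barState d a x y = (d - a) / (2 * d) * x + (1 - (d - a) / (2 * d)) * y := by
  unfold barState
  field_simp
  ring

theorem barState_weight_mem_Icc {d a : ℝ} (hd : d < 0) (ha : |a| ≤ -d) :
    (d - a) / (2 * d) ∈ Icc (0 : ℝ) 1 := by
  obtain ⟨hlo, hhi⟩ := abs_le.1 ha
  have h2d : 2 * d < 0 := by linarith
  exact ⟨div_nonneg_of_nonpos (by linarith) h2d.le, (div_le_one_of_neg h2d).2 (by linarith)⟩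

theorem barState_mem_segment {d a : ℝ} (hd : d < 0) (ha : |a| ≤ -d) (x y : ℝ) :
    barState d a x y ∈ segment ℝ x y := by
  obtain ⟨hθ₀, hθ₁⟩ := barState_weight_mem_Icc hd ha
  exact ⟨_, _, hθ₀, sub_nonneg.2 hθ₁, add_sub_cancel _ _,
    (barState_eq_weighted_sum hd.ne a x y).symm⟩

/-- The bar state of the monolithic convex limiter is a convex combination of
`u_i` and `u_j`. -/
theorem bar_state_convex_combination
    (aij aji : ℝ) (h1 : 0 ≤ aij + aji) (h2 : 0 < max aij (max 0 aji))
    (dij : ℝ) (hd : dij = -(max aij (max 0 aji))) (ui uj : ℝ) :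
    dij < 0 ∧
    |aij| ≤ -dij ∧
    (∃ θ : ℝ, 0 ≤ θ ∧ θ ≤ 1 ∧
      (dij * (ui + uj) + aij * (uj - ui)) / (2 * dij) = θ * ui + (1 - θ) * uj) ∧
    min ui uj ≤ (dij * (ui + uj) + aij * (uj - ui)) / (2 * dij) ∧
    (dij * (ui + uj) + aij * (uj - ui)) / (2 * dij) ≤ max ui uj := by
  subst hd
  have hneg : -max aij (max 0 aji) < 0 := neg_neg_of_pos h2
  have habs : |aij| ≤ -(-max aij (max 0 aji)) := by
    rw [neg_neg]; exact abs_le_max_of_add_nonneg h1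
  obtain ⟨hθ₀, hθ₁⟩ := barState_weight_mem_Icc hneg habs
  have hbounds := segment_eq_uIcc ui uj ▸ barState_mem_segment hneg habs ui uj
  exact ⟨hneg, habs, ⟨_, hθ₀, hθ₁, barState_eq_weighted_sum hneg.ne aij ui uj⟩, hbounds⟩
end

section
/- Let N ≥ 1, let a_{ij} and d_{ij} (with d_{ij} = d_{ji}) be real numbers, let u ∈ ℝ^N, and set r_{ij}^{ss} = d_{ij}(u_j - u_i). Then for the monolithic upwind (MU) limiter: (i) 0 ≤ R_i^+ ≤ 1 and 0 ≤ R_i^- ≤ 1 for every i, hence 0 ≤ α_{ij} ≤ 1 for all i, j; and (ii) for every i, the limited upwind antidiffusion satisfies Q_i^- ≤ ∑_{j≠i, a_{ji} ≤ a_{ij}} α_{ij} r_{ij}^{ss} ≤ Q_i^+. -/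
noncomputable section
open scoped Classical

/-- MU limiter: `P_i^+ = ∑_{j : a_{ji} ≤ a_{ij}} max{r_{ij}, 0}`. -/
def muPp {N : ℕ} (a : Matrix (Fin N) (Fin N) ℝ) (r : Fin N → Fin N → ℝ) (i : Fin N) : ℝ :=
  ∑ j ∈ Finset.univ.filter (fun j => a j i ≤ a i j), max (r i j) 0

/-- MU limiter: `P_i^- = ∑_{j : a_{ji} ≤ a_{ij}} min{r_{ij}, 0}`. -/
def muPm {N : ℕ} (a : Matrix (Fin N) (Fin N) ℝ) (r : Fin N → Fin N → ℝ) (i : Fin N) : ℝ :=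
  ∑ j ∈ Finset.univ.filter (fun j => a j i ≤ a i j), min (r i j) 0

/-- MU limiter: `Q_i^+ = -∑_j min{r_{ij}, 0}`. -/
def muQp {N : ℕ} (r : Fin N → Fin N → ℝ) (i : Fin N) : ℝ :=
  -∑ j, min (r i j) 0

/-- MU limiter: `Q_i^- = -∑_j max{r_{ij}, 0}`. -/
def muQm {N : ℕ} (r : Fin N → Fin N → ℝ) (i : Fin N) : ℝ :=
  -∑ j, max (r i j) 0

/-- MU limiter: `R_i^+ = min{1, Q_i^+ / P_i^+}`, with `R_i^+ = 1` if `P_i^+ = 0`. -/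
def muRp {N : ℕ} (a : Matrix (Fin N) (Fin N) ℝ) (r : Fin N → Fin N → ℝ) (i : Fin N) : ℝ :=
  if muPp a r i = 0 then 1 else min 1 (muQp r i / muPp a r i)

/-- MU limiter: `R_i^- = min{1, Q_i^- / P_i^-}`, with `R_i^- = 1` if `P_i^- = 0`. -/
def muRm {N : ℕ} (a : Matrix (Fin N) (Fin N) ℝ) (r : Fin N → Fin N → ℝ) (i : Fin N) : ℝ :=
  if muPm a r i = 0 then 1 else min 1 (muQm r i / muPm a r i)

/-- Correction factors of the monolithic upwind (MU) limiter: set on upwind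
pairs (`a_{ji} ≤ a_{ij}`) and extended by symmetry. -/
def muAlpha {N : ℕ} (a : Matrix (Fin N) (Fin N) ℝ) (r : Fin N → Fin N → ℝ)
    (i j : Fin N) : ℝ :=
  if a j i ≤ a i j then
    (if 0 < r i j then muRp a r i else if r i j < 0 then muRm a r i else 1)
  else
    (if 0 < r j i then muRp a r j else if r j i < 0 then muRm a r j else 1)

/-- Properties of the monolithic upwind (MU) limiter: the correction factors
lie in `[0, 1]` and the limited upwind antidiffusion satisfies the local
bounds `Q_i^- ≤ ∑_{j ≠ i, a_{ji} ≤ a_{ij}} α_{ij} r_{ij} ≤ Q_i^+`. -/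
theorem mu_limiter_properties
    (N : ℕ) (hN : 1 ≤ N) (a d : Matrix (Fin N) (Fin N) ℝ)
    (hdsymm : ∀ i j, d i j = d j i) (u : Fin N → ℝ)
    (r : Fin N → Fin N → ℝ) (hr : ∀ i j, r i j = d i j * (u j - u i)) :
    ((∀ i, 0 ≤ muRp a r i ∧ muRp a r i ≤ 1) ∧
     (∀ i, 0 ≤ muRm a r i ∧ muRm a r i ≤ 1) ∧
     (∀ i j, 0 ≤ muAlpha a r i j ∧ muAlpha a r i j ≤ 1)) ∧
    (∀ i,
      muQm r i ≤
        ∑ j ∈ (Finset.univ.erase i).filter (fun j => a j i ≤ a i j),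
          muAlpha a r i j * r i j ∧
      ∑ j ∈ (Finset.univ.erase i).filter (fun j => a j i ≤ a i j),
          muAlpha a r i j * r i j ≤ muQp r i) := by
  have hQp : ∀ i, 0 ≤ muQp r i := fun i => by
    unfold muQp
    rw [neg_nonneg]
    exact Finset.sum_nonpos fun j _ => min_le_right _ 0
  have hQm : ∀ i, muQm r i ≤ 0 := fun i => by
    unfold muQm
    rw [neg_nonpos]
    exact Finset.sum_nonneg fun j _ => le_max_right _ 0
  have hPp : ∀ i, 0 ≤ muPp a r i := fun i =>
    Finset.sum_nonneg fun j _ => le_max_right _ 0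
  have hPm : ∀ i, muPm a r i ≤ 0 := fun i =>
    Finset.sum_nonpos fun j _ => min_le_right _ 0
  have hRp : ∀ i, 0 ≤ muRp a r i ∧ muRp a r i ≤ 1 := fun i => by
    unfold muRp
    split_ifs with h
    · exact ⟨zero_le_one, le_refl 1⟩
    · have hP : 0 < muPp a r i := lt_of_le_of_ne (hPp i) (Ne.symm h)
      exact ⟨le_min zero_le_one (div_nonneg (hQp i) hP.le), min_le_left _ _⟩
  have hRm : ∀ i, 0 ≤ muRm a r i ∧ muRm a r i ≤ 1 := fun i => by
    unfold muRm
    split_ifs with h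
    · exact ⟨zero_le_one, le_refl 1⟩
    · have hP : muPm a r i < 0 := lt_of_le_of_ne (hPm i) h
      have hdiv : 0 ≤ muQm r i / muPm a r i :=
        by rw [← neg_div_neg_eq]; exact div_nonneg (by linarith [hQm i]) (by linarith)
      exact ⟨le_min zero_le_one hdiv, min_le_left _ _⟩
  have hAlpha : ∀ i j, 0 ≤ muAlpha a r i j ∧ muAlpha a r i j ≤ 1 := fun i j => by
    unfold muAlpha
    split_ifs <;> first
      | exact hRp _ | exact hRm _ | exact ⟨zero_le_one, le_refl 1⟩
  refine ⟨⟨hRp, hRm, hAlpha⟩, fun i => ?_⟩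
  have hRpP : muRp a r i * muPp a r i ≤ muQp r i := by
    unfold muRp
    split_ifs with h
    · rw [h, mul_zero]; exact hQp i
    · have hP : 0 < muPp a r i := lt_of_le_of_ne (hPp i) (Ne.symm h)
      calc min 1 (muQp r i / muPp a r i) * muPp a r i
          ≤ (muQp r i / muPp a r i) * muPp a r i :=
            mul_le_mul_of_nonneg_right (min_le_right _ _) hP.le
        _ = muQp r i := div_mul_cancel₀ _ hP.ne'
  have hRmP : muQm r i ≤ muRm a r i * muPm a r i := by
    unfold muRm
    split_ifs with h
    · rw [h, mul_zero]; exact hQm i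
    · have hP : muPm a r i < 0 := lt_of_le_of_ne (hPm i) h
      calc muQm r i = (muQm r i / muPm a r i) * muPm a r i :=
            (div_mul_cancel₀ _ hP.ne).symm
        _ ≤ min 1 (muQm r i / muPm a r i) * muPm a r i :=
            mul_le_mul_of_nonpos_right (min_le_right _ _) hP.le
  set T := Finset.univ.filter (fun j => a j i ≤ a i j) with hT
  have hiT : i ∈ T := by simp [hT]
  have hset : (Finset.univ.erase i).filter (fun j => a j i ≤ a i j) = T.erase i := by
    ext j; simp [hT, and_comm]
  rw [hset]
  have hterm : ∀ j ∈ T.erase i,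
      muRm a r i * min (r i j) 0 ≤ muAlpha a r i j * r i j ∧
      muAlpha a r i j * r i j ≤ muRp a r i * max (r i j) 0 := by
    intro j hj
    have hup : a j i ≤ a i j := by
      have := Finset.mem_of_mem_erase hj
      simpa [hT] using this
    unfold muAlpha
    rw [if_pos hup]
    rcases lt_trichotomy (r i j) 0 with hr0 | hr0 | hr0
    · rw [if_neg (by linarith), if_pos hr0]
      refine ⟨by rw [min_eq_left hr0.le], ?_⟩
      calc muRm a r i * r i j ≤ 0 :=
            mul_nonpos_of_nonneg_of_nonpos (hRm i).1 hr0.le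
        _ ≤ muRp a r i * max (r i j) 0 := by
            rw [max_eq_right hr0.le, mul_zero]
    · simp [hr0]
    · rw [if_pos hr0]
      refine ⟨?_, by rw [max_eq_left hr0.le]⟩
      calc muRm a r i * min (r i j) 0 = 0 := by
            rw [min_eq_right hr0.le, mul_zero]
        _ ≤ muRp a r i * r i j := mul_nonneg (hRp i).1 hr0.le
  have hsum_max : ∑ j ∈ T.erase i, max (r i j) 0 ≤ muPp a r i := by
    unfold muPp
    rw [← hT, ← Finset.add_sum_erase T _ hiT]
    linarith [le_max_right (r i i) (0:ℝ)]
  have hsum_min : muPm a r i ≤ ∑ j ∈ T.erase i, min (r i j) 0 := by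
    unfold muPm
    rw [← hT, ← Finset.add_sum_erase T _ hiT]
    linarith [min_le_right (r i i) (0:ℝ)]
  constructor
  · calc muQm r i ≤ muRm a r i * muPm a r i := hRmP
      _ ≤ muRm a r i * ∑ j ∈ T.erase i, min (r i j) 0 :=
          mul_le_mul_of_nonneg_left hsum_min (hRm i).1
      _ = ∑ j ∈ T.erase i, muRm a r i * min (r i j) 0 := Finset.mul_sum _ _ _
      _ ≤ ∑ j ∈ T.erase i, muAlpha a r i j * r i j :=
          Finset.sum_le_sum fun j hj => (hterm j hj).1
  · calc ∑ j ∈ T.erase i, muAlpha a r i j * r i j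
        ≤ ∑ j ∈ T.erase i, muRp a r i * max (r i j) 0 :=
          Finset.sum_le_sum fun j hj => (hterm j hj).2
      _ = muRp a r i * ∑ j ∈ T.erase i, max (r i j) 0 := (Finset.mul_sum _ _ _).symm
      _ ≤ muRp a r i * muPp a r i :=
          mul_le_mul_of_nonneg_left hsum_max (hRp i).1
      _ ≤ muQp r i := hRpP
end
end

section
/- Let N ≥ 2, let d_{ij} (i ≠ j) be real numbers, let u ∈ ℝ^N, set r_{ij}^{ss} = d_{ij}(u_j - u_i), and let q_i ≥ 0 and bounds u_i^{min} ≤ u_i ≤ u_i^{max} be given for each i. Then for the linearity preserving (LP) limiter: (i) 0 ≤ ᾱ_{ij} ≤ 1 and 0 ≤ α_{ij} ≤ 1 for all i ≠ j; (ii) α_{ij} = α_{ji} whenever r_{ji}^{ss} = -r_{ij}^{ss} (in particular when d is symmetric); and (iii) for every i, Q_i^- ≤ ∑_{j≠i} α_{ij} r_{ij}^{ss} ≤ Q_i^+, where Q_i^+ = q_i(u_i^{max} - u_i) and Q_i^- = q_i(u_i^{min} - u_i). -/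
noncomputable section

/-- LP limiter: `P_i^+ = ∑_{j ≠ i} max{r_{ij}, 0}`. -/
def lpPp {N : ℕ} (r : Fin N → Fin N → ℝ) (i : Fin N) : ℝ :=
  ∑ j ∈ Finset.univ.erase i, max (r i j) 0

/-- LP limiter: `P_i^- = ∑_{j ≠ i} min{r_{ij}, 0}`. -/
def lpPm {N : ℕ} (r : Fin N → Fin N → ℝ) (i : Fin N) : ℝ :=
  ∑ j ∈ Finset.univ.erase i, min (r i j) 0

/-- LP limiter: `R_i^+ = min{1, Q_i^+ / P_i^+}` with `Q_i^+ = q_i (u_i^max - u_i)`,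
and `R_i^+ = 1` if `P_i^+ = 0`. -/
def lpRp {N : ℕ} (r : Fin N → Fin N → ℝ) (q u umax : Fin N → ℝ) (i : Fin N) : ℝ :=
  if lpPp r i = 0 then 1 else min 1 (q i * (umax i - u i) / lpPp r i)

/-- LP limiter: `R_i^- = min{1, Q_i^- / P_i^-}` with `Q_i^- = q_i (u_i^min - u_i)`,
and `R_i^- = 1` if `P_i^- = 0`. -/
def lpRm {N : ℕ} (r : Fin N → Fin N → ℝ) (q u umin : Fin N → ℝ) (i : Fin N) : ℝ :=
  if lpPm r i = 0 then 1 else min 1 (q i * (umin i - u i) / lpPm r i)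

/-- LP limiter: the preliminary factors `ᾱ_{ij}`. -/
def lpAbar {N : ℕ} (r : Fin N → Fin N → ℝ) (q u umin umax : Fin N → ℝ)
    (i j : Fin N) : ℝ :=
  if 0 < r i j then lpRp r q u umax i
  else if r i j < 0 then lpRm r q u umin i
  else 1

/-- LP limiter: `α_{ij} = min{ᾱ_{ij}, ᾱ_{ji}}`. -/
def lpAlpha {N : ℕ} (r : Fin N → Fin N → ℝ) (q u umin umax : Fin N → ℝ)
    (i j : Fin N) : ℝ :=
  min (lpAbar r q u umin umax i j) (lpAbar r q u umin umax j i)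

/-- Properties of the linearity preserving (LP) limiter: factors in `[0, 1]`,
symmetry, and local bounds on the limited antidiffusion. -/
theorem lp_limiter_properties
    (N : ℕ) (hN : 2 ≤ N) (d : Fin N → Fin N → ℝ) (u : Fin N → ℝ)
    (r : Fin N → Fin N → ℝ) (hr : ∀ i j, r i j = d i j * (u j - u i))
    (q umin umax : Fin N → ℝ) (hq : ∀ i, 0 ≤ q i)
    (hmin : ∀ i, umin i ≤ u i) (hmax : ∀ i, u i ≤ umax i) :
    (∀ i j, i ≠ j →
      (0 ≤ lpAbar r q u umin umax i j ∧ lpAbar r q u umin umax i j ≤ 1) ∧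
      (0 ≤ lpAlpha r q u umin umax i j ∧ lpAlpha r q u umin umax i j ≤ 1)) ∧
    (∀ i j, i ≠ j → r j i = -r i j →
      lpAlpha r q u umin umax i j = lpAlpha r q u umin umax j i) ∧
    (∀ i,
      q i * (umin i - u i) ≤
        ∑ j ∈ Finset.univ.erase i, lpAlpha r q u umin umax i j * r i j ∧
      ∑ j ∈ Finset.univ.erase i, lpAlpha r q u umin umax i j * r i j ≤
        q i * (umax i - u i)) := by

  have hPp : ∀ i, 0 ≤ lpPp r i := fun i =>
    Finset.sum_nonneg fun j _ => le_max_right _ _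
  have hPm : ∀ i, lpPm r i ≤ 0 := fun i =>
    Finset.sum_nonpos fun j _ => min_le_right _ _
  have hQp : ∀ i, 0 ≤ q i * (umax i - u i) := fun i =>
    mul_nonneg (hq i) (sub_nonneg.2 (hmax i))
  have hQm : ∀ i, q i * (umin i - u i) ≤ 0 := fun i =>
    mul_nonpos_of_nonneg_of_nonpos (hq i) (sub_nonpos.2 (hmin i))
  have hRp0 : ∀ i, 0 ≤ lpRp r q u umax i := by
    intro i; unfold lpRp; split
    · norm_num
    · exact le_min zero_le_one (div_nonneg (hQp i) (hPp i))
  have hRp1 : ∀ i, lpRp r q u umax i ≤ 1 := by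
    intro i; unfold lpRp; split
    · exact le_refl 1
    · exact min_le_left _ _
  have hRm0 : ∀ i, 0 ≤ lpRm r q u umin i := by
    intro i; unfold lpRm; split
    · norm_num
    · refine le_min zero_le_one ?_
      have h2 := div_nonneg (neg_nonneg.2 (hQm i)) (neg_nonneg.2 (hPm i))
      rwa [neg_div_neg_eq] at h2
  have hRm1 : ∀ i, lpRm r q u umin i ≤ 1 := by
    intro i; unfold lpRm; split
    · exact le_refl 1
    · exact min_le_left _ _
  have hA0 : ∀ i j, 0 ≤ lpAbar r q u umin umax i j := by
    intro i j; unfold lpAbar; split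
    · exact hRp0 i
    · split
      · exact hRm0 i
      · norm_num
  have hA1 : ∀ i j, lpAbar r q u umin umax i j ≤ 1 := by
    intro i j; unfold lpAbar; split
    · exact hRp1 i
    · split
      · exact hRm1 i
      · exact le_refl 1
  have ha0 : ∀ i j, 0 ≤ lpAlpha r q u umin umax i j := fun i j =>
    le_min (hA0 i j) (hA0 j i)
  have ha1 : ∀ i j, lpAlpha r q u umin umax i j ≤ 1 := fun i j =>
    (min_le_left _ _).trans (hA1 i j)
  refine ⟨fun i j _ => ⟨⟨hA0 i j, hA1 i j⟩, ha0 i j, ha1 i j⟩,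
    fun i j _ _ => min_comm _ _, fun i => ⟨?_, ?_⟩⟩
  · -- lower bound
    have step1 : ∀ j ∈ Finset.univ.erase i,
        lpRm r q u umin i * min (r i j) 0 ≤ lpAlpha r q u umin umax i j * r i j := by
      intro j _
      rcases lt_or_ge (r i j) 0 with h | h
      · rw [min_eq_left h.le]
        have hle : lpAlpha r q u umin umax i j ≤ lpRm r q u umin i := by
          have : lpAbar r q u umin umax i j = lpRm r q u umin i := by
            unfold lpAbar; rw [if_neg (not_lt.2 h.le), if_pos h]
          exact this ▸ min_le_left _ _
        exact mul_le_mul_of_nonpos_right hle h.le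
      · rw [min_eq_right h, mul_zero]
        exact mul_nonneg (ha0 i j) h
    have step2 : lpRm r q u umin i * lpPm r i ≤
        ∑ j ∈ Finset.univ.erase i, lpAlpha r q u umin umax i j * r i j := by
      rw [lpPm, Finset.mul_sum]
      exact Finset.sum_le_sum step1
    refine le_trans ?_ step2
    by_cases h : lpPm r i = 0
    · rw [h, mul_zero]; exact hQm i
    · have hPm' : lpPm r i < 0 := lt_of_le_of_ne (hPm i) h
      have hR : lpRm r q u umin i ≤ q i * (umin i - u i) / lpPm r i := by
        rw [lpRm, if_neg h]; exact min_le_right _ _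
      calc q i * (umin i - u i)
          = q i * (umin i - u i) / lpPm r i * lpPm r i := by
            rw [div_mul_cancel₀ _ h]
        _ ≤ lpRm r q u umin i * lpPm r i :=
            mul_le_mul_of_nonpos_right hR hPm'.le
  · -- upper bound
    have step1 : ∀ j ∈ Finset.univ.erase i,
        lpAlpha r q u umin umax i j * r i j ≤ lpRp r q u umax i * max (r i j) 0 := by
      intro j _
      rcases lt_or_ge 0 (r i j) with h | h
      · rw [max_eq_left h.le]
        have hle : lpAlpha r q u umin umax i j ≤ lpRp r q u umax i := by
          have : lpAbar r q u umin umax i j = lpRp r q u umax i := by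
            unfold lpAbar; rw [if_pos h]
          exact this ▸ min_le_left _ _
        exact mul_le_mul_of_nonneg_right hle h.le
      · rw [max_eq_right h, mul_zero]
        exact mul_nonpos_of_nonneg_of_nonpos (ha0 i j) h
    have step2 : ∑ j ∈ Finset.univ.erase i, lpAlpha r q u umin umax i j * r i j ≤
        lpRp r q u umax i * lpPp r i := by
      rw [lpPp, Finset.mul_sum]
      exact Finset.sum_le_sum step1
    refine step2.trans ?_
    by_cases h : lpPp r i = 0
    · rw [h, mul_zero]; exact hQp i
    · have hPp' : 0 < lpPp r i := lt_of_le_of_ne (hPp i) (Ne.symm h)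
      have hR : lpRp r q u umax i ≤ q i * (umax i - u i) / lpPp r i := by
        rw [lpRp, if_neg h]; exact min_le_right _ _
      calc lpRp r q u umax i * lpPp r i
          ≤ q i * (umax i - u i) / lpPp r i * lpPp r i :=
            mul_le_mul_of_nonneg_right hR hPp'.le
        _ = q i * (umax i - u i) := div_mul_cancel₀ _ h
end
end
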